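/- Suppose W is determined by the pair (Y_{[k]}, K), i.e., H(W | Y_{[k]}, K) = 0, and K takes values in a finite set of cardinality at most N. Then for every integer r with 1 ≤ r ≤ k, Σ_{S ⊆ {1,…,k}, |S| = r} H(W | Y_S, X) ≤ C(k,r) · ( ((k−r)/k) · H(Y_{[k]} | X) + log N ); equivalently, the average of H(W | Y_S, X) over all r-element subsets S is at most ((k−r)/k) · H(Y_{[k]} | X) + log N. -/

import Mathlib

open Finset

/-- Probability that the finitely-valued random variable `X` takes value `x`,
with respect to the probability mass function `p` on the finite sample space `Ω`. -/
noncomputable def pmfProb {Ω : Type*} [Fintype Ω] {α : Type*} [Fintype α] [DecidableEq α]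
    (p : Ω → ℝ) (X : Ω → α) (x : α) : ℝ :=
  ∑ ω, if X ω = x then p ω else 0

/-- Shannon entropy (natural logarithm) of the random variable `X`. -/
noncomputable def entH {Ω : Type*} [Fintype Ω] {α : Type*} [Fintype α] [DecidableEq α]
    (p : Ω → ℝ) (X : Ω → α) : ℝ :=
  ∑ x, Real.negMulLog (pmfProb p X x)

/-- Conditional Shannon entropy `H(X|Y) = H(X,Y) - H(Y)`. -/
noncomputable def condH {Ω : Type*} [Fintype Ω] {α β : Type*} [Fintype α] [DecidableEq α]
    [Fintype β] [DecidableEq β] (p : Ω → ℝ) (X : Ω → α) (Y : Ω → β) : ℝ :=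
  entH p (fun ω => (X ω, Y ω)) - entH p Y

/-- Mutual information `I(X;Y) = H(X) + H(Y) - H(X,Y)`. -/
noncomputable def mutInfo {Ω : Type*} [Fintype Ω] {α β : Type*} [Fintype α] [DecidableEq α]
    [Fintype β] [DecidableEq β] (p : Ω → ℝ) (X : Ω → α) (Y : Ω → β) : ℝ :=
  entH p X + entH p Y - entH p (fun ω => (X ω, Y ω))

/-- The conditional probability mass function given an event `E`. -/
noncomputable def condPMF {Ω : Type*} [Fintype Ω] (p : Ω → ℝ) (E : Ω → Prop)
    [DecidablePred E] : Ω → ℝ :=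
  fun ω => if E ω then p ω / (∑ ω' ∈ Finset.univ.filter E, p ω') else 0

/-!
Since `W` is a function of `(Y, K)` and `K` takes at most `N` values, for every `S`
`H(W | Y_S, X) ≤ H(Y, K | Y_S, X) ≤ H(Y | Y_S, X) + log N = H(Y | X) - H(Y_S | X) + log N`.
Summing over the `r`-sets `S`, it remains to show Han's inequality
`∑_{|S| = r} H(Y_S | X) ≥ (r / k) C(k, r) H(Y | X)`. Conditioning reduces entropy (Gibbs'
inequality against the conditionally independent coupling), so the marginal gain
`F T - F (T \ {i})` of `F S = H(Y_S | X)` decreases in `T`. Hence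
`(|T| - 1) F T ≤ ∑_{i ∈ T} F (T \ {i})`, and double counting shows that the level averages of `F`,
divided by the level, decrease in the level.
-/

section PMF

variable {Ω α β : Type*} [Fintype Ω] [Fintype α] [DecidableEq α] [Fintype β] [DecidableEq β]
  {p : Ω → ℝ}

lemma pmfProb_nonneg (hp : ∀ ω, 0 ≤ p ω) (X : Ω → α) (x : α) : 0 ≤ pmfProb p X x :=
  sum_nonneg fun ω _ => by split_ifs <;> simp [hp ω]

lemma sum_pmfProb_mul (p : Ω → ℝ) (X : Ω → α) (f : α → ℝ) :
    ∑ x, pmfProb p X x * f x = ∑ ω, p ω * f (X ω) := by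
  simp_rw [pmfProb, sum_mul, ite_mul, zero_mul]
  rw [sum_comm]
  simp

lemma sum_pmfProb (p : Ω → ℝ) (X : Ω → α) : ∑ x, pmfProb p X x = ∑ ω, p ω := by
  simpa using sum_pmfProb_mul p X 1

lemma pmfProb_le_pmfProb_comp (hp : ∀ ω, 0 ≤ p ω) (X : Ω → α) (g : α → β) (x : α) :
    pmfProb p X x ≤ pmfProb p (fun ω => g (X ω)) (g x) :=
  sum_le_sum fun ω _ => by
    split_ifs with h h' <;> simp_all

lemma pmfProb_comp_of_injective {g : α → β} (hg : g.Injective) (X : Ω → α) (x : α) :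
    pmfProb p (fun ω => g (X ω)) (g x) = pmfProb p X x := by
  simp only [pmfProb, hg.eq_iff]

lemma sum_pmfProb_pair_left (p : Ω → ℝ) (X : Ω → α) (Y : Ω → β) (y : β) :
    ∑ x, pmfProb p (fun ω => (X ω, Y ω)) (x, y) = pmfProb p Y y := by
  simp only [pmfProb, Prod.mk.injEq]
  rw [sum_comm]
  refine sum_congr rfl fun ω _ => ?_
  by_cases h : Y ω = y <;> simp [h]

end PMF

lemma negMulLog_le_neg_mul_log_add_sub {a b : ℝ} (ha : 0 ≤ a) (hb : 0 ≤ b) (hab : 0 < a → 0 < b) :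
    Real.negMulLog a ≤ -(a * Real.log b) + (b - a) := by
  rcases ha.eq_or_lt with rfl | ha
  · simpa using hb
  have hb := hab ha
  have h := mul_le_mul_of_nonneg_left (Real.log_le_sub_one_of_pos (div_pos hb ha)) ha.le
  rw [Real.log_div hb.ne' ha.ne', mul_sub_one, mul_div_cancel₀ _ ha.ne', mul_sub] at h
  rw [Real.negMulLog]
  linarith

lemma sum_negMulLog_le_neg_sum_mul_log {α : Type*} [Fintype α] {P Q : α → ℝ}
    (hP : ∀ x, 0 ≤ P x) (hQ : ∀ x, 0 ≤ Q x) (hPQ : ∀ x, 0 < P x → 0 < Q x)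
    (hsum : ∑ x, Q x ≤ ∑ x, P x) :
    ∑ x, Real.negMulLog (P x) ≤ -∑ x, P x * Real.log (Q x) := by
  calc ∑ x, Real.negMulLog (P x) ≤ ∑ x, (-(P x * Real.log (Q x)) + (Q x - P x)) :=
        sum_le_sum fun x _ => negMulLog_le_neg_mul_log_add_sub (hP x) (hQ x) (hPQ x)
    _ ≤ -∑ x, P x * Real.log (Q x) := by
        rw [sum_add_distrib, sum_sub_distrib, sum_neg_distrib]
        linarith

section Entropy

variable {Ω α β γ δ : Type*} [Fintype Ω] [Fintype α] [DecidableEq α] [Fintype β] [DecidableEq β]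
  [Fintype γ] [DecidableEq γ] [Fintype δ] [DecidableEq δ] {p : Ω → ℝ}

lemma entH_eq_neg_sum (p : Ω → ℝ) (X : Ω → α) :
    entH p X = -∑ x, pmfProb p X x * Real.log (pmfProb p X x) := by
  simp [entH, Real.negMulLog]

lemma entH_comp (p : Ω → ℝ) (X : Ω → α) (g : α → β) :
    entH p (fun ω => g (X ω))
      = -∑ x, pmfProb p X x * Real.log (pmfProb p (fun ω => g (X ω)) (g x)) := by
  rw [entH_eq_neg_sum, sum_pmfProb_mul, sum_pmfProb_mul p X]

lemma entH_comp_of_injective (p : Ω → ℝ) {g : α → β} (hg : g.Injective) (X : Ω → α) :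
    entH p (fun ω => g (X ω)) = entH p X := by
  rw [entH_comp, entH_eq_neg_sum p X]
  simp only [pmfProb_comp_of_injective hg]

lemma entH_comp_le (hp : ∀ ω, 0 ≤ p ω) (X : Ω → α) (g : α → β) :
    entH p (fun ω => g (X ω)) ≤ entH p X := by
  rw [entH_comp, entH_eq_neg_sum, neg_le_neg_iff]
  refine sum_le_sum fun x _ => ?_
  rcases (pmfProb_nonneg hp X x).eq_or_lt with h | h
  · simp [← h]
  · exact mul_le_mul_of_nonneg_left
      (Real.log_le_log h (pmfProb_le_pmfProb_comp hp X g x)) h.le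

lemma entH_const (hp1 : ∑ ω, p ω = 1) : entH p (fun _ => ()) = 0 := by
  simp [entH, pmfProb, hp1]

lemma entH_le_log (hp : ∀ ω, 0 ≤ p ω) (hp1 : ∑ ω, p ω = 1) (X : Ω → α)
    {n : ℕ} (hn : 0 < n) (hcard : Fintype.card α ≤ n) : entH p X ≤ Real.log n := by
  have hn' : (0 : ℝ) < n := by exact_mod_cast hn
  have hsum : ∑ x, pmfProb p X x = 1 := by rw [sum_pmfProb, hp1]
  calc entH p X ≤ -∑ x, pmfProb p X x * Real.log (n : ℝ)⁻¹ :=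
        sum_negMulLog_le_neg_sum_mul_log (pmfProb_nonneg hp X) (fun _ => by positivity)
          (fun _ _ => by positivity) (by
            rw [hsum, sum_const, card_univ, nsmul_eq_mul, ← div_eq_mul_inv,
              div_le_one hn']
            exact_mod_cast hcard)
    _ = Real.log n := by rw [← sum_mul, hsum, Real.log_inv]; ring

lemma entH_triple_add_entH_le (hp : ∀ ω, 0 ≤ p ω) (X : Ω → α) (Y : Ω → β) (Z : Ω → γ) :
    entH p (fun ω => (X ω, (Y ω, Z ω))) + entH p Z
      ≤ entH p (fun ω => (X ω, Z ω)) + entH p (fun ω => (Y ω, Z ω)) := by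
  set T : Ω → α × β × γ := fun ω => (X ω, (Y ω, Z ω))
  set P := pmfProb p T
  set qXZ := pmfProb p (fun ω => (X ω, Z ω))
  set qYZ := pmfProb p (fun ω => (Y ω, Z ω))
  set qZ := pmfProb p Z
  -- the distribution of `X` and `Y` conditionally independent given `Z`
  set Q : α × β × γ → ℝ := fun t => qXZ (t.1, t.2.2) * qYZ t.2 / qZ t.2.2
  have hP_le : ∀ t, P t ≤ qXZ (t.1, t.2.2) ∧ P t ≤ qYZ t.2 ∧ P t ≤ qZ t.2.2 := fun t =>
    ⟨pmfProb_le_pmfProb_comp hp T (fun t => (t.1, t.2.2)) t,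
      pmfProb_le_pmfProb_comp hp T Prod.snd t,
      pmfProb_le_pmfProb_comp hp T (fun t => t.2.2) t⟩
  have hsumQ : ∑ t, Q t = ∑ t, P t := by
    calc ∑ t, Q t = ∑ z, (∑ x, qXZ (x, z)) * (∑ y, qYZ (y, z)) / qZ z := by
          simp only [Q, Fintype.sum_prod_type, sum_div, sum_mul, mul_sum]
          rw [sum_comm_cycle]
          exact sum_congr rfl fun _ _ => sum_comm
      _ = ∑ t, P t := by
          simp only [qXZ, qYZ, sum_pmfProb_pair_left, mul_self_div_self, qZ, P, sum_pmfProb]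
  have hlogQ : ∀ t, P t * Real.log (Q t) = P t * Real.log (qXZ (t.1, t.2.2))
      + P t * Real.log (qYZ t.2) - P t * Real.log (qZ t.2.2) := by
    intro t
    rcases (pmfProb_nonneg hp T t).eq_or_lt with h | h
    · simp [P, ← h]
    obtain ⟨h1, h2, h3⟩ := hP_le t
    rw [Real.log_div (mul_pos (h.trans_le h1) (h.trans_le h2)).ne' (h.trans_le h3).ne',
      Real.log_mul (h.trans_le h1).ne' (h.trans_le h2).ne']
    ring
  have hgibbs : entH p T ≤ -∑ t, P t * Real.log (Q t) :=
    sum_negMulLog_le_neg_sum_mul_log (pmfProb_nonneg hp T)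
      (fun t => div_nonneg (mul_nonneg (pmfProb_nonneg hp _ _) (pmfProb_nonneg hp _ _))
        (pmfProb_nonneg hp _ _))
      (fun t ht => by
        obtain ⟨h1, h2, h3⟩ := hP_le t
        exact div_pos (mul_pos (ht.trans_le h1) (ht.trans_le h2)) (ht.trans_le h3))
      hsumQ.le
  have hXZ : entH p (fun ω => (X ω, Z ω)) = -∑ t, P t * Real.log (qXZ (t.1, t.2.2)) :=
    entH_comp p T fun t => (t.1, t.2.2)
  have hYZ : entH p (fun ω => (Y ω, Z ω)) = -∑ t, P t * Real.log (qYZ t.2) :=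
    entH_comp p T Prod.snd
  have hZ : entH p Z = -∑ t, P t * Real.log (qZ t.2.2) :=
    entH_comp p T fun t => t.2.2
  simp only [hlogQ, sum_sub_distrib, sum_add_distrib] at hgibbs
  linarith
lemma condH_nonneg (hp : ∀ ω, 0 ≤ p ω) (X : Ω → α) (Y : Ω → β) : 0 ≤ condH p X Y :=
  sub_nonneg.2 (entH_comp_le hp (fun ω => (X ω, Y ω)) Prod.snd)

lemma condH_comp_of_injective (p : Ω → ℝ) {f : α → γ} {g : β → δ} (hf : f.Injective)
    (hg : g.Injective) (X : Ω → α) (Y : Ω → β) :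
    condH p (fun ω => f (X ω)) (fun ω => g (Y ω)) = condH p X Y := by
  rw [condH, condH, entH_comp_of_injective p hg,
    ← entH_comp_of_injective p (hf.prodMap hg) (fun ω => (X ω, Y ω))]
  rfl

lemma condH_comp_le (hp : ∀ ω, 0 ≤ p ω) (f : α → γ) (X : Ω → α) (Y : Ω → β) :
    condH p (fun ω => f (X ω)) Y ≤ condH p X Y :=
  sub_le_sub_right (entH_comp_le hp (fun ω => (X ω, Y ω)) (Prod.map f id)) _

lemma condH_pair_left (p : Ω → ℝ) (X : Ω → α) (Y : Ω → β) (Z : Ω → γ) :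
    condH p (fun ω => (X ω, Y ω)) Z = condH p X Z + condH p Y (fun ω => (X ω, Z ω)) := by
  have h : entH p (fun ω => (Y ω, (X ω, Z ω))) = entH p (fun ω => ((X ω, Y ω), Z ω)) :=
    entH_comp_of_injective p (g := fun t : (α × β) × γ => (t.1.2, (t.1.1, t.2)))
      (fun _ _ h => by simp_all [Prod.ext_iff]) fun ω => ((X ω, Y ω), Z ω)
  simp only [condH, h]
  ring

lemma condH_pair_right_le (hp : ∀ ω, 0 ≤ p ω) (X : Ω → α) (Y : Ω → β) (Z : Ω → γ) :
    condH p X (fun ω => (Y ω, Z ω)) ≤ condH p X Z := by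
  have h := entH_triple_add_entH_le hp X Y Z
  simp only [condH]
  linarith

lemma condH_le_condH_comp (hp : ∀ ω, 0 ≤ p ω) (X : Ω → α) (Y : Ω → β) (g : β → γ) :
    condH p X Y ≤ condH p X (fun ω => g (Y ω)) :=
  calc condH p X Y = condH p X (fun ω => (Y ω, g (Y ω))) :=
        (condH_comp_of_injective p (f := id) (g := fun y => (y, g y)) Function.injective_id
          (fun _ _ h => congrArg Prod.fst h) X Y).symm
    _ ≤ condH p X (fun ω => g (Y ω)) := condH_pair_right_le hp X Y _

lemma condH_le_entH (hp : ∀ ω, 0 ≤ p ω) (hp1 : ∑ ω, p ω = 1) (X : Ω → α) (Y : Ω → β) :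
    condH p X Y ≤ entH p X :=
  calc condH p X Y ≤ condH p X (fun _ => ()) := condH_le_condH_comp hp X Y fun _ => ()
    _ = entH p X := by
        rw [condH, entH_const hp1, sub_zero]
        exact entH_comp_of_injective p (g := fun x => (x, ()))
          (fun _ _ h => congrArg Prod.fst h) X

lemma condH_le_of_condH_eq_zero (hp : ∀ ω, 0 ≤ p ω) {X : Ω → α} {Z : Ω → γ}
    (hXZ : condH p X Z = 0) (Y : Ω → β) : condH p X Y ≤ condH p Z Y :=
  calc condH p X Y ≤ condH p (fun ω => (Z ω, X ω)) Y :=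
        condH_comp_le hp Prod.snd (fun ω => (Z ω, X ω)) Y
    _ = condH p Z Y + condH p X (fun ω => (Z ω, Y ω)) := condH_pair_left p Z X Y
    _ ≤ condH p Z Y + condH p X Z := by
        gcongr
        exact condH_le_condH_comp hp X (fun ω => (Z ω, Y ω)) Prod.fst
    _ = condH p Z Y := by rw [hXZ, add_zero]

lemma condH_pair_le_add_log (hp : ∀ ω, 0 ≤ p ω) (hp1 : ∑ ω, p ω = 1) (X : Ω → α)
    (K : Ω → γ) (Y : Ω → β) {N : ℕ} (hN : 0 < N) (hK : Fintype.card γ ≤ N) :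
    condH p (fun ω => (X ω, K ω)) Y ≤ condH p X Y + Real.log N := by
  rw [condH_pair_left]
  gcongr
  exact (condH_le_entH hp hp1 K _).trans (entH_le_log hp hp1 K hN hK)

lemma condH_pair_comp_right (p : Ω → ℝ) (X : Ω → α) (g : α → γ) (Y : Ω → β) :
    condH p X (fun ω => (g (X ω), Y ω)) = condH p X Y - condH p (fun ω => g (X ω)) Y := by
  have h : entH p (fun ω => (X ω, (g (X ω), Y ω))) = entH p (fun ω => (X ω, Y ω)) :=
    entH_comp_of_injective p (g := fun t : α × β => (t.1, (g t.1, t.2)))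
      (fun _ _ h => by simp_all [Prod.ext_iff]) fun ω => (X ω, Y ω)
  simp only [condH, h]
  ring

end Entropy

section Han

variable {ι : Type*} [DecidableEq ι] {F : Finset ι → ℝ}

lemma card_sub_one_mul_le_sum_erase (hF₀ : 0 ≤ F ∅)
    (hF : ∀ S T i, S ⊆ T → i ∈ S → F T - F (T.erase i) ≤ F S - F (S.erase i))
    (T : Finset ι) : ((#T : ℝ) - 1) * F T ≤ ∑ i ∈ T, F (T.erase i) := by
  induction T using Finset.induction_on with
  | empty => simpa using hF₀
  | @insert a S ha ih =>
    have hstep : ∀ i ∈ S, F (insert a S) - F S + F (S.erase i) ≤ F ((insert a S).erase i) :=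
      fun i hi => by linarith [hF S (insert a S) i (subset_insert a S) hi]
    have hsum := sum_le_sum hstep
    rw [sum_add_distrib, sum_const, nsmul_eq_mul] at hsum
    rw [card_insert_of_notMem ha, sum_insert ha, erase_insert ha]
    push_cast
    linarith

lemma sum_powersetCard_succ_sum_erase [Fintype ι] (F : Finset ι → ℝ) {m : ℕ}
    (hm : m ≤ Fintype.card ι) :
    ∑ T ∈ powersetCard (m + 1) univ, ∑ i ∈ T, F (T.erase i)
      = ((Fintype.card ι : ℝ) - m) * ∑ S ∈ powersetCard m univ, F S := by
  calc ∑ T ∈ powersetCard (m + 1) univ, ∑ i ∈ T, F (T.erase i)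
      = ∑ S ∈ powersetCard m univ, ∑ _i ∈ univ \ S, F S := by
        rw [sum_sigma', sum_sigma']
        refine sum_nbij' (fun q => ⟨q.1.erase q.2, q.2⟩) (fun q => ⟨insert q.2 q.1, q.2⟩)
          ?_ ?_ ?_ ?_ fun _ _ => rfl
        · simp +contextual [mem_powersetCard, card_erase_of_mem]
        · simp +contextual [mem_powersetCard, card_insert_of_notMem]
        · simp +contextual [insert_erase]
        · simp +contextual
    _ = ((Fintype.card ι : ℝ) - m) * ∑ S ∈ powersetCard m univ, F S := by
        rw [mul_sum]
        refine sum_congr rfl fun S hS => ?_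
        rw [mem_powersetCard] at hS
        rw [sum_const, nsmul_eq_mul, card_sdiff_of_subset hS.1, card_univ, hS.2,
          Nat.cast_sub hm]

lemma mul_choose_mul_le_mul_sum_powersetCard [Fintype ι] (hF₀ : 0 ≤ F ∅)
    (hF : ∀ S T i, S ⊆ T → i ∈ S → F T - F (T.erase i) ≤ F S - F (S.erase i))
    {m : ℕ} (hm : m ≤ Fintype.card ι) :
    (m : ℝ) * (Fintype.card ι).choose m * F univ
      ≤ Fintype.card ι * ∑ S ∈ powersetCard m univ, F S := by
  set n := Fintype.card ι
  induction hm using Nat.decreasingInduction with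
  | self =>
    rw [show powersetCard n univ = {univ} from powersetCard_self univ, sum_singleton,
      Nat.choose_self, Nat.cast_one, mul_one]
  | of_succ m hm ih =>
    set A := ∑ T ∈ powersetCard (m + 1) univ, F T
    set B := ∑ S ∈ powersetCard m univ, F S
    have hlevel : (m : ℝ) * A ≤ (n - m) * B :=
      calc (m : ℝ) * A = ∑ T ∈ powersetCard (m + 1) univ, ((#T : ℝ) - 1) * F T := by
            rw [mul_sum]
            refine sum_congr rfl fun T hT => ?_
            rw [(mem_powersetCard.1 hT).2]
            push_cast
            ring
        _ ≤ ∑ T ∈ powersetCard (m + 1) univ, ∑ i ∈ T, F (T.erase i) :=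
            sum_le_sum fun T _ => card_sub_one_mul_le_sum_erase hF₀ hF T
        _ = (n - m) * B := sum_powersetCard_succ_sum_erase F hm.le
    have hchoose : ((m : ℝ) + 1) * n.choose (m + 1) = (n - m) * n.choose m := by
      rw [← Nat.cast_sub hm.le]
      exact_mod_cast (mul_comm _ _).trans ((Nat.choose_succ_right_eq n m).trans (mul_comm _ _))
    have hnm : (0 : ℝ) < n - m := sub_pos.2 (by exact_mod_cast hm)
    refine le_of_mul_le_mul_left ?_ hnm
    calc (n - m) * ((m : ℝ) * n.choose m * F univ)
        = m * ((m + 1 : ℕ) * n.choose (m + 1) * F univ) := by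
          push_cast
          linear_combination (-(m : ℝ) * F univ) * hchoose
      _ ≤ m * (n * A) := by gcongr
      _ = n * (m * A) := by ring
      _ ≤ n * ((n - m) * B) := by gcongr
      _ = (n - m) * (n * B) := by ring

end Han

section SubsetCondH

variable {Ω ι α β : Type*} [Fintype Ω] [DecidableEq ι] [Fintype α] [DecidableEq α]
  [Fintype β] [DecidableEq β] {p : Ω → ℝ}

noncomputable def subsetCondH (p : Ω → ℝ) (Y : ι → Ω → α) (X : Ω → β) (S : Finset ι) : ℝ :=
  condH p (fun ω (j : S) => Y j ω) X

lemma subsetCondH_eq_erase_add (p : Ω → ℝ) (Y : ι → Ω → α) (X : Ω → β) {T : Finset ι} {i : ι}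
    (hi : i ∈ T) :
    subsetCondH p Y X T = subsetCondH p Y X (T.erase i)
      + condH p (Y i) (fun ω => ((fun j : T.erase i => Y j ω), X ω)) := by
  let split : (T → α) → (T.erase i → α) × α :=
    fun y => (fun j => y ⟨j, mem_of_mem_erase j.2⟩, y ⟨i, hi⟩)
  have hsplit : split.Injective := fun a b h => funext fun ⟨j, hj⟩ => by
    by_cases hji : j = i
    · subst hji
      exact congrArg Prod.snd h
    · exact congrFun (congrArg Prod.fst h) ⟨j, mem_erase.2 ⟨hji, hj⟩⟩
  calc subsetCondH p Y X T = condH p (fun ω => split fun j : T => Y j ω) X :=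
        (condH_comp_of_injective p hsplit Function.injective_id _ X).symm
    _ = _ := condH_pair_left p _ (Y i) X

lemma subsetCondH_sub_erase_le (hp : ∀ ω, 0 ≤ p ω) (Y : ι → Ω → α) (X : Ω → β)
    {S T : Finset ι} {i : ι} (hST : S ⊆ T) (hi : i ∈ S) :
    subsetCondH p Y X T - subsetCondH p Y X (T.erase i)
      ≤ subsetCondH p Y X S - subsetCondH p Y X (S.erase i) := by
  rw [subsetCondH_eq_erase_add p Y X hi, subsetCondH_eq_erase_add p Y X (hST hi)]
  simpa using condH_le_condH_comp hp (Y i) (fun ω => ((fun j : T.erase i => Y j ω), X ω))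
    fun q => (fun j : S.erase i => q.1 ⟨j, erase_subset_erase i hST j.2⟩, q.2)

lemma subsetCondH_univ [Fintype ι] (p : Ω → ℝ) (Y : ι → Ω → α) (X : Ω → β) :
    subsetCondH p Y X univ = condH p (fun ω j => Y j ω) X := by
  have hres : (fun (y : ι → α) (j : (univ : Finset ι)) => y j).Injective :=
    fun _ _ h => funext fun j => congrFun h ⟨j, mem_univ j⟩
  exact condH_comp_of_injective p hres (g := id) Function.injective_id (fun ω j => Y j ω) X

end SubsetCondH

/-- if `W` is determined by `(Y_{[k]}, K)` and `K` takes values in a finite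
set of cardinality at most `N`, then for every `1 ≤ r ≤ k`,
`∑_{|S| = r} H(W | Y_S, X) ≤ C(k,r) * (((k-r)/k) * H(Y_{[k]} | X) + log N)`. -/
theorem sum_condEntropy_message_rand_le {Ω α β μ κ : Type*} [Fintype Ω] [Fintype α]
    [DecidableEq α] [Fintype β] [DecidableEq β] [Fintype μ] [DecidableEq μ]
    [Fintype κ] [DecidableEq κ]
    (p : Ω → ℝ) (hp : ∀ ω, 0 ≤ p ω) (hp1 : ∑ ω, p ω = 1)
    (k : ℕ) (X : Ω → β) (Y : Fin k → Ω → α) (K : Ω → κ) (W : Ω → μ)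
    (N : ℕ) (hN : 1 ≤ N) (hK : Fintype.card κ ≤ N)
    (hW : condH p W (fun ω => ((fun j : Fin k => Y j ω), K ω)) = 0)
    (r : ℕ) (hr1 : 1 ≤ r) (hrk : r ≤ k) :
    ∑ S ∈ Finset.powersetCard r (Finset.univ : Finset (Fin k)),
        condH p W (fun ω => ((fun j : ↥S => Y j.1 ω), X ω))
      ≤ (k.choose r : ℝ) *
          (((k : ℝ) - (r : ℝ)) / (k : ℝ) * condH p (fun ω (j : Fin k) => Y j ω) X
            + Real.log N) := by
  set H := condH p (fun ω (j : Fin k) => Y j ω) X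
  set F := subsetCondH p Y X
  have hk : (0 : ℝ) < k := by exact_mod_cast (show 0 < k by omega)
  have hS : ∀ S : Finset (Fin k), condH p W (fun ω => ((fun j : ↥S => Y j.1 ω), X ω))
      ≤ H - F S + Real.log N := fun S =>
    calc _ ≤ condH p (fun ω => ((fun j : Fin k => Y j ω), K ω))
          (fun ω => ((fun j : ↥S => Y j.1 ω), X ω)) := condH_le_of_condH_eq_zero hp hW _
      _ ≤ condH p (fun ω (j : Fin k) => Y j ω) (fun ω => ((fun j : ↥S => Y j.1 ω), X ω))
            + Real.log N := condH_pair_le_add_log hp hp1 _ K _ hN hK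
      _ = H - F S + Real.log N := congrArg (· + Real.log N)
          (condH_pair_comp_right p (fun ω (j : Fin k) => Y j ω) (fun y (j : S) => y j) X)
  have han := mul_choose_mul_le_mul_sum_powersetCard (condH_nonneg hp _ X)
    (fun _ _ _ => subsetCondH_sub_erase_le hp Y X) (m := r) (by simpa using hrk)
  rw [subsetCondH_univ, Fintype.card_fin] at han
  have hF : r * k.choose r * H / k ≤ ∑ S ∈ powersetCard r univ, F S := by
    rw [div_le_iff₀' hk]
    exact han
  calc _ ≤ ∑ S ∈ powersetCard r univ, (H - F S + Real.log N) := sum_le_sum fun S _ => hS S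
    _ = k.choose r * (H + Real.log N) - ∑ S ∈ powersetCard r univ, F S := by
        rw [sum_add_distrib, sum_sub_distrib, sum_const, sum_const, card_powersetCard,
          card_univ, Fintype.card_fin, nsmul_eq_mul, nsmul_eq_mul]
        ring
    _ ≤ _ := by
        field_simp
        linarith
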